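/- arXiv:2210.12312 — 2 statements merged into one kernel-verified Lean document; each statement's English description precedes it below -/
import Mathlib

section
/- Let p = 2q + 1 with q ≥ 0 an integer, and let ε ∈ [0, 2/(5p)]. Then cost attains a unique minimizer x* over trajectories feasible for (p, 2/5) and a unique minimizer y* over trajectories feasible for (p, 2/5 + ε), and |x*(h) − y*(h)| = ε for every h ∈ {1,…,p}. -/
/-- A trajectory `x : ℕ → ℝ` is feasible for `(p, z)` if `x 0 = 0`, `x p = z`,
`x t ∈ [-1,1]` for all `t ≤ p`, and `|x (t+1) - x t| ≤ 4/5` for all `t < p`. -/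
def Feasible (p : ℕ) (z : ℝ) (x : ℕ → ℝ) : Prop :=
  x 0 = 0 ∧ x p = z ∧ (∀ t ≤ p, x t ∈ Set.Icc (-1 : ℝ) 1) ∧
    ∀ t < p, |x (t + 1) - x t| ≤ 4 / 5

/-- `ξ t = 4/5` if `t` is odd and `-4/5` if `t` is even. -/
noncomputable def xiTgt (t : ℕ) : ℝ := if Odd t then 4 / 5 else -(4 / 5)

/-- The cost of a trajectory: `∑_{t=0}^{p} (x t - ξ t)^2`. -/
noncomputable def cost (p : ℕ) (x : ℕ → ℝ) : ℝ :=
  ∑ t ∈ Finset.range (p + 1), (x t - xiTgt t) ^ 2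


noncomputable def traj (ε : ℝ) (t : ℕ) : ℝ :=
  if t = 0 then 0 else if Odd t then 2/5 + ε else -(2/5) + ε

noncomputable def mult (ε : ℝ) (t : ℕ) : ℝ :=
  if Odd t then 4/5 - 2*t*ε else 2*t*ε

lemma traj_odd (ε : ℝ) {t : ℕ} (ht : Odd t) : traj ε t = 2/5 + ε := by
  have : t ≠ 0 := by rintro rfl; simp [Nat.odd_iff] at ht
  simp [traj, this, ht]

lemma traj_even (ε : ℝ) {t : ℕ} (ht : ¬ Odd t) (h0 : t ≠ 0) : traj ε t = -(2/5) + ε := by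
  simp [traj, h0, ht]

lemma abel (ε : ℝ) (d : ℕ → ℝ) (n : ℕ) :
    ∑ t ∈ Finset.range n, 2 * (ε + (-1:ℝ)^(t+1) * (2/5)) * d (t+1)
      = (∑ t ∈ Finset.range n, mult ε (t+1) * ((-1:ℝ)^(t+1) * (d (t+1) - d (t+2))))
        + (-1:ℝ)^n * mult ε n * d (n+1) := by
  induction n with
  | zero => simp [mult]
  | succ n ih =>
      rw [Finset.sum_range_succ, Finset.sum_range_succ, ih]
      have key : 2 * (ε + (-1:ℝ)^(n+1) * (2/5))
          = (-1:ℝ)^(n+1) * (mult ε (n+1) + mult ε n) := by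
        rcases Nat.even_or_odd n with he | ho
        · have h1 : ¬ Odd n := Nat.not_odd_iff_even.mpr he
          have h2 : Odd (n+1) := Even.add_one he
          simp only [mult, if_pos h2, if_neg h1, h2.neg_one_pow]
          push_cast
          ring
        · have h2 : ¬ Odd (n+1) := by
            rw [Nat.odd_add_one]; simpa using ho
          have h3 : Even (n+1) := Odd.add_one ho
          simp only [mult, if_neg h2, if_pos ho, h3.neg_one_pow]
          push_cast
          ring
      linear_combination (d (n+1)) * key

lemma key (q : ℕ) (ε : ℝ) (h0 : 0 ≤ ε) (h1 : ε ≤ 2 / (5 * (2*(q:ℝ)+1)))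
    (y : ℕ → ℝ) (hy : Feasible (2*q+1) (2/5+ε) y) :
    ∃ N : ℝ, 0 ≤ N ∧ cost (2*q+1) y
      = cost (2*q+1) (traj ε) + (∑ t ∈ Finset.range (2*q+2), (y t - traj ε t)^2) + N := by
  obtain ⟨hy0, hyp, _hybox, hystep⟩ := hy
  set d : ℕ → ℝ := fun t => y t - traj ε t with hd
  have hoddp : Odd (2*q+1) := ⟨q, by ring⟩
  have hd0 : d 0 = 0 := by simp [hd, traj, hy0]
  have hdp : d (2*q+1) = 0 := by
    simp [hd, traj_odd ε hoddp, hyp]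
  refine ⟨∑ t ∈ Finset.range (2*q), mult ε (t+1) * ((-1:ℝ)^(t+1) * (d (t+1) - d (t+2))), ?_, ?_⟩
  · apply Finset.sum_nonneg
    intro t ht
    have htlt : t + 1 ≤ 2*q := Finset.mem_range.mp ht
    have hmul : 0 ≤ mult ε (t+1) := by
      unfold mult
      split
      · -- odd case : 4/5 - 2(t+1)ε ≥ 0
        have hcast : ((t:ℝ)+1) ≤ 2*q := by exact_mod_cast htlt
        have hq0 : (0:ℝ) < 5*(2*q+1) := by positivity
        rw [le_div_iff₀ hq0] at h1
        push_cast
        nlinarith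
      · positivity
    have hsign : 0 ≤ (-1:ℝ)^(t+1) * (d (t+1) - d (t+2)) := by
      have hstep := hystep (t+1) (by omega)
      rw [abs_le] at hstep
      rcases Nat.even_or_odd (t+1) with he | ho
      · -- t+1 even, traj step is +4/5, y step ≤ 4/5 so d(t+1) ≥ d(t+2)
        have h2 : Odd (t+2) := Even.add_one he
        have e1 : traj ε (t+1) = -(2/5) + ε :=
          traj_even ε (Nat.not_odd_iff_even.mpr he) (by omega)
        have e2 : traj ε (t+2) = 2/5 + ε := traj_odd ε h2
        have hpow : (-1:ℝ)^(t+1) = 1 := he.neg_one_pow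
        rw [hpow, one_mul]
        have := hstep.2
        simp only [hd, e1, e2]
        linarith
      · have h2 : ¬ Odd (t+2) := by
          rw [show t+2 = (t+1)+1 by ring, Nat.odd_add_one]; simpa using ho
        have e1 : traj ε (t+1) = 2/5 + ε := traj_odd ε ho
        have e2 : traj ε (t+2) = -(2/5) + ε := traj_even ε h2 (by omega)
        have hpow : (-1:ℝ)^(t+1) = -1 := ho.neg_one_pow
        rw [hpow]
        have := hstep.1
        simp only [hd, e1, e2]
        nlinarith
    exact mul_nonneg hmul hsign
  · -- cost identity
    have hpt : ∀ t, (y t - xiTgt t)^2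
        = (traj ε t - xiTgt t)^2 + (d t)^2 + 2 * (traj ε t - xiTgt t) * d t := by
      intro t; simp only [hd]; ring
    have hA : ∀ t, traj ε (t+1) - xiTgt (t+1) = ε + (-1:ℝ)^(t+1) * (2/5) := by
      intro t
      rcases Nat.even_or_odd (t+1) with he | ho
      · rw [traj_even ε (Nat.not_odd_iff_even.mpr he) (by omega), he.neg_one_pow]
        simp [xiTgt, Nat.not_odd_iff_even.mpr he]
        ring
      · rw [traj_odd ε ho, ho.neg_one_pow]
        simp [xiTgt, ho]
        ring
    have hcost : cost (2*q+1) y = cost (2*q+1) (traj ε)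
        + (∑ t ∈ Finset.range (2*q+2), (d t)^2)
        + (∑ t ∈ Finset.range (2*q+2), 2 * (traj ε t - xiTgt t) * d t) := by
      unfold cost
      rw [← Finset.sum_add_distrib, ← Finset.sum_add_distrib]
      exact Finset.sum_congr rfl fun t _ => hpt t
    have hcross : (∑ t ∈ Finset.range (2*q+2), 2 * (traj ε t - xiTgt t) * d t)
        = ∑ t ∈ Finset.range (2*q), mult ε (t+1) * ((-1:ℝ)^(t+1) * (d (t+1) - d (t+2))) := by
      rw [show 2*q+2 = (2*q+1)+1 by ring, Finset.sum_range_succ']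
      rw [hd0]
      rw [Finset.sum_range_succ]
      rw [show (2*q)+1 = 2*q+1 by ring, hdp]
      have : ∀ t ∈ Finset.range (2*q), 2 * (traj ε (t+1) - xiTgt (t+1)) * d (t+1)
          = 2 * (ε + (-1:ℝ)^(t+1) * (2/5)) * d (t+1) := by
        intro t _; rw [hA]
      rw [Finset.sum_congr rfl this, abel ε d (2*q)]
      have heven : Even (2*q) := ⟨q, by ring⟩
      rw [heven.neg_one_pow, hdp]
      ring
    rw [hcost, hcross]

lemma eps_le (q : ℕ) (ε : ℝ) (h1 : ε ≤ 2 / (5 * (2*(q:ℝ)+1))) : ε ≤ 2/5 := by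
  have hq0 : (0:ℝ) < 5*(2*q+1) := by positivity
  rw [le_div_iff₀ hq0] at h1
  nlinarith [Nat.cast_nonneg (α := ℝ) q]

lemma feas (q : ℕ) (ε : ℝ) (h0 : 0 ≤ ε) (h1 : ε ≤ 2 / (5 * (2*(q:ℝ)+1))) :
    Feasible (2*q+1) (2/5+ε) (traj ε) := by
  have h25 : ε ≤ 2/5 := eps_le q ε h1
  have hoddp : Odd (2*q+1) := ⟨q, by ring⟩
  refine ⟨by simp [traj], traj_odd ε hoddp, ?_, ?_⟩
  · intro t _
    rcases eq_or_ne t 0 with rfl | ht0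
    · simp [traj]
    · rcases Nat.even_or_odd t with he | ho
      · rw [traj_even ε (Nat.not_odd_iff_even.mpr he) ht0]
        constructor <;> linarith
      · rw [traj_odd ε ho]
        constructor <;> linarith
  · intro t _
    rcases eq_or_ne t 0 with rfl | ht0
    · have : Odd 1 := ⟨0, by ring⟩
      rw [traj_odd ε this]
      simp [traj]
      rw [abs_of_nonneg (by linarith)]
      linarith
    · rcases Nat.even_or_odd t with he | ho
      · have h2 : Odd (t+1) := Even.add_one he
        rw [traj_odd ε h2, traj_even ε (Nat.not_odd_iff_even.mpr he) ht0]
        rw [show 2/5 + ε - (-(2/5) + ε) = 4/5 by ring, abs_of_nonneg (by norm_num)]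
      · have h2 : ¬ Odd (t+1) := by rw [Nat.odd_add_one]; simpa using ho
        rw [traj_even ε h2 (by omega), traj_odd ε ho]
        rw [show -(2/5) + ε - (2/5 + ε) = -(4/5) by ring, abs_neg, abs_of_nonneg (by norm_num)]

lemma master (q : ℕ) (ε : ℝ) (h0 : 0 ≤ ε) (h1 : ε ≤ 2 / (5 * (2*(q:ℝ)+1))) :
    Feasible (2*q+1) (2/5+ε) (traj ε) ∧
    (∀ y, Feasible (2*q+1) (2/5+ε) y → cost (2*q+1) (traj ε) ≤ cost (2*q+1) y) ∧
    (∀ y, Feasible (2*q+1) (2/5+ε) y → cost (2*q+1) y = cost (2*q+1) (traj ε) →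
      ∀ t ≤ 2*q+1, y t = traj ε t) := by
  refine ⟨feas q ε h0 h1, ?_, ?_⟩
  · intro y hy
    obtain ⟨N, hN, hEq⟩ := key q ε h0 h1 y hy
    have hsq : 0 ≤ ∑ t ∈ Finset.range (2*q+2), (y t - traj ε t)^2 :=
      Finset.sum_nonneg fun t _ => sq_nonneg _
    linarith
  · intro y hy hEq t ht
    obtain ⟨N, hN, hId⟩ := key q ε h0 h1 y hy
    have hsum : ∑ t ∈ Finset.range (2*q+2), (y t - traj ε t)^2 = 0 := by
      have hsq : 0 ≤ ∑ t ∈ Finset.range (2*q+2), (y t - traj ε t)^2 :=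
        Finset.sum_nonneg fun t _ => sq_nonneg _
      linarith
    have := (Finset.sum_eq_zero_iff_of_nonneg (fun t _ => sq_nonneg (y t - traj ε t))).mp
      hsum t (Finset.mem_range.mpr (by omega))
    have := pow_eq_zero_iff (n := 2) (by norm_num) |>.mp this
    linarith [this]

theorem stmt_2 (q : ℕ) (ε : ℝ)
    (hε : ε ∈ Set.Icc (0 : ℝ) (2 / (5 * (2 * (q : ℝ) + 1)))) :
    ∃ xs ys : ℕ → ℝ,
      (Feasible (2 * q + 1) (2 / 5) xs ∧
        (∀ y, Feasible (2 * q + 1) (2 / 5) y → cost (2 * q + 1) xs ≤ cost (2 * q + 1) y) ∧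
        (∀ y, Feasible (2 * q + 1) (2 / 5) y → cost (2 * q + 1) y = cost (2 * q + 1) xs →
          ∀ t ≤ 2 * q + 1, y t = xs t)) ∧
      (Feasible (2 * q + 1) (2 / 5 + ε) ys ∧
        (∀ y, Feasible (2 * q + 1) (2 / 5 + ε) y → cost (2 * q + 1) ys ≤ cost (2 * q + 1) y) ∧
        (∀ y, Feasible (2 * q + 1) (2 / 5 + ε) y → cost (2 * q + 1) y = cost (2 * q + 1) ys →
          ∀ t ≤ 2 * q + 1, y t = ys t)) ∧
      ∀ h, 1 ≤ h → h ≤ 2 * q + 1 → |xs h - ys h| = ε := by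
  obtain ⟨h0, h1⟩ := hε
  refine ⟨traj 0, traj ε, ?_, master q ε h0 h1, ?_⟩
  · have h00 : (0:ℝ) ≤ 0 := le_refl 0
    have h01 : (0:ℝ) ≤ 2 / (5 * (2*(q:ℝ)+1)) := by positivity
    have := master q 0 h00 h01
    rwa [show (2:ℝ)/5 + 0 = 2/5 by norm_num] at this
  · intro h hh1 hh2
    have hne : h ≠ 0 := by omega
    rcases Nat.even_or_odd h with he | ho
    · rw [traj_even 0 (Nat.not_odd_iff_even.mpr he) hne, traj_even ε (Nat.not_odd_iff_even.mpr he) hne]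
      rw [show -(2/5) + 0 - (-(2/5) + ε) = -ε by ring, abs_neg, abs_of_nonneg h0]
    · rw [traj_odd 0 ho, traj_odd ε ho]
      rw [show 2/5 + 0 - (2/5 + ε) = -ε by ring, abs_neg, abs_of_nonneg h0]
end

section
/- Let m, d ≥ 1 and let A ∈ ℝ^{(md)×(md)} be an invertible matrix that is block-tridiagonal, i.e., A[i][j] = 0 whenever |i−j| > 1, with ‖A[i][j]‖ ≤ a for all block indices i, j ∈ {1,…,m}. Suppose ‖((A²)^{-1})[i][j]‖ ≤ c λ^{|i−j|} for all i, j ∈ {1,…,m}, where a, c > 0 and λ ∈ (0,1). Then ‖(A^{-1})[i][j]‖ ≤ (3ac/λ) · λ^{|i−j|} for all i, j ∈ {1,…,m}. -/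
/-!
Since `A⁻¹ = (A²)⁻¹ A`, the block `(A⁻¹)[i][j]` is `∑ₖ ((A²)⁻¹)[i][k] A[k][j]`. Tridiagonality
leaves at most the three terms with `|k - j| ≤ 1`, and for those `|i - k| ≥ |i - j| - 1`, so each
is bounded by `c λ^(|i-j|-1) a ≤ (a c / λ) λ^|i-j|`.
-/

/-- The `(i, j)` block of an `(m*d) × (m*d)` matrix viewed as an `m × m` grid of
`d × d` blocks. -/
def blk {m d : ℕ} (A : Matrix (Fin m × Fin d) (Fin m × Fin d) ℝ) (i j : Fin m) :
    Matrix (Fin d) (Fin d) ℝ :=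
  Matrix.of fun a b => A (i, a) (j, b)

/-- The spectral (ℓ₂ operator) norm of a real `d × d` matrix. -/
noncomputable def specNorm {d : ℕ} (B : Matrix (Fin d) (Fin d) ℝ) : ℝ :=
  ‖LinearMap.toContinuousLinearMap (Matrix.toEuclideanLin B)‖

open Finset
open scoped Matrix.Norms.L2Operator

lemma specNorm_eq_norm {d : ℕ} (B : Matrix (Fin d) (Fin d) ℝ) : specNorm B = ‖B‖ :=
  (Matrix.l2_opNorm_def B).symm

lemma blk_mul {m d : ℕ} (M N : Matrix (Fin m × Fin d) (Fin m × Fin d) ℝ) (i j : Fin m) :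
    blk (M * N) i j = ∑ k, blk M i k * blk N k j := by
  ext a b
  simp [blk, Matrix.mul_apply, Matrix.sum_apply, Fintype.sum_prod_type]

lemma Matrix.inv_eq_inv_sq_mul {n R : Type*} [Fintype n] [DecidableEq n] [CommRing R]
    {A : Matrix n n R} (hA : IsUnit A) : A⁻¹ = (A ^ 2)⁻¹ * A := by
  rw [← Matrix.inv_pow', sq, mul_assoc,
    Matrix.nonsing_inv_mul A ((Matrix.isUnit_iff_isUnit_det A).mp hA), mul_one]

lemma Fin.card_filter_dist_le_one_le_three {m : ℕ} (j : Fin m) :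
    #{k : Fin m | Nat.dist k j ≤ 1} ≤ 3 := by
  calc #{k : Fin m | Nat.dist k j ≤ 1}
      ≤ #(Icc ((j : ℕ) - 1) (j + 1)) := by
        refine card_le_card_of_injOn Fin.val (fun k hk => ?_) Fin.val_injective.injOn
        simp only [coe_filter, mem_univ, true_and, Set.mem_ofPred_eq] at hk
        unfold Nat.dist at hk
        simp only [coe_Icc, Set.mem_Icc]
        omega
    _ ≤ 3 := by rw [Nat.card_Icc]; omega

lemma norm_sum_mul_le_of_support_near {R : Type*} [SeminormedRing R] {m : ℕ}
    (x y : Fin m → R) (j : Fin m) {B a : ℝ}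
    (hy : ∀ k : Fin m, 1 < Nat.dist k j → y k = 0)
    (hx : ∀ k : Fin m, Nat.dist k j ≤ 1 → ‖x k‖ ≤ B) (hya : ∀ k, ‖y k‖ ≤ a) :
    ‖∑ k, x k * y k‖ ≤ 3 * B * a := by
  have hB : 0 ≤ B := (norm_nonneg _).trans (hx j (by simp))
  have ha : 0 ≤ a := (norm_nonneg _).trans (hya j)
  have hterm : ∀ k : Fin m, ‖x k * y k‖ ≤ if Nat.dist k j ≤ 1 then B * a else 0 := fun k => by
    split_ifs with hk
    · exact (norm_mul_le _ _).trans (mul_le_mul (hx k hk) (hya k) (norm_nonneg _) hB)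
    · rw [hy k (by omega), mul_zero, norm_zero]
  calc ‖∑ k, x k * y k‖
      ≤ ∑ k : Fin m, if Nat.dist k j ≤ 1 then B * a else 0 :=
        (norm_sum_le _ _).trans (sum_le_sum fun k _ => hterm k)
    _ = #{k : Fin m | Nat.dist k j ≤ 1} * (B * a) := by
        rw [← sum_filter, sum_const, nsmul_eq_mul]
    _ ≤ 3 * B * a := by
        rw [mul_assoc]
        gcongr
        exact_mod_cast Fin.card_filter_dist_le_one_le_three j

lemma pow_sub_one_le_pow_div {lam : ℝ} (h0 : 0 < lam) (h1 : lam ≤ 1) (n : ℕ) :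
    lam ^ (n - 1) ≤ lam ^ n / lam := by
  rcases n with _ | n
  · rw [pow_zero, le_div_iff₀ h0]
    simpa using h1
  · rw [Nat.add_sub_cancel, pow_succ, mul_div_cancel_right₀ _ h0.ne']

theorem stmt_11_general (m d : ℕ)
    (A : Matrix (Fin m × Fin d) (Fin m × Fin d) ℝ) (hA : IsUnit A)
    (htri : ∀ i j : Fin m, 1 < Nat.dist i j → blk A i j = 0)
    (a c lam : ℝ) (hlam : lam ∈ Set.Ioo (0 : ℝ) 1)
    (hbound : ∀ i j : Fin m, specNorm (blk A i j) ≤ a)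
    (hsq : ∀ i j : Fin m, specNorm (blk (A ^ 2)⁻¹ i j) ≤ c * lam ^ (Nat.dist i j)) :
    ∀ i j : Fin m, specNorm (blk A⁻¹ i j) ≤ 3 * a * c / lam * lam ^ (Nat.dist i j) := by
  obtain ⟨hlam0, hlam1⟩ := hlam
  intro i j
  have hc : 0 ≤ c := by
    simpa [specNorm_eq_norm] using (norm_nonneg _).trans (hsq i i)
  have hnear : ∀ k : Fin m, Nat.dist k j ≤ 1 →
      ‖blk (A ^ 2)⁻¹ i k‖ ≤ c * lam ^ (Nat.dist i j - 1) := fun k hk => by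
    have hik : Nat.dist i j - 1 ≤ Nat.dist i k := by
      have := Nat.dist.triangle_inequality i k j
      omega
    rw [← specNorm_eq_norm]
    exact (hsq i k).trans
      (mul_le_mul_of_nonneg_left (pow_le_pow_of_le_one hlam0.le hlam1.le hik) hc)
  calc specNorm (blk A⁻¹ i j) = ‖∑ k, blk (A ^ 2)⁻¹ i k * blk A k j‖ := by
        rw [specNorm_eq_norm, Matrix.inv_eq_inv_sq_mul hA, blk_mul]
    _ ≤ 3 * (c * lam ^ (Nat.dist i j - 1)) * a :=
        norm_sum_mul_le_of_support_near _ _ j (fun k hk => htri k j hk) hnear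
          (fun k => specNorm_eq_norm (blk A k j) ▸ hbound k j)
    _ ≤ 3 * a * c / lam * lam ^ (Nat.dist i j) := by
        have ha : 0 ≤ a := (norm_nonneg _).trans (specNorm_eq_norm (blk A i j) ▸ hbound i j)
        calc 3 * (c * lam ^ (Nat.dist i j - 1)) * a
            ≤ 3 * (c * (lam ^ (Nat.dist i j) / lam)) * a := by
              gcongr
              exact pow_sub_one_le_pow_div hlam0 hlam1.le _
          _ = 3 * a * c / lam * lam ^ (Nat.dist i j) := by ring

theorem stmt_11 (m d : ℕ) (hm : 1 ≤ m) (hd : 1 ≤ d)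
    (A : Matrix (Fin m × Fin d) (Fin m × Fin d) ℝ) (hA : IsUnit A)
    (htri : ∀ i j : Fin m, 1 < Nat.dist i j → blk A i j = 0)
    (a c lam : ℝ) (ha : 0 < a) (hc : 0 < c) (hlam : lam ∈ Set.Ioo (0 : ℝ) 1)
    (hbound : ∀ i j : Fin m, specNorm (blk A i j) ≤ a)
    (hsq : ∀ i j : Fin m, specNorm (blk (A ^ 2)⁻¹ i j) ≤ c * lam ^ (Nat.dist i j)) :
    ∀ i j : Fin m, specNorm (blk A⁻¹ i j) ≤ 3 * a * c / lam * lam ^ (Nat.dist i j) :=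
  stmt_11_general m d A hA htri a c lam hlam hbound hsq
end
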